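/- Antisymmetry of the iterated double contour integral (from the proof of Lemma A.2). For y ∈ ℝ define F₁(y) = ∫_{Y₁∪Y₂} ( ∫_{Y₃∪Y₄} (sz/(s−z)) e^{−2i(ys + 4s³/3)} ds ) e^{2i(yz + 4z³/3)} dz and F₂(y) = ∫_{Y₃∪Y₄} ( ∫_{Y₁∪Y₂} (sz/(s−z)) e^{2i(ys + 4s³/3)} ds ) e^{−2i(yz + 4z³/3)} dz. Then for every y ∈ ℝ the corresponding double integrals (over the product of the parametrizing half-lines) converge absolutely and F₂(y) = −F₁(y). -/

import Mathlib

open MeasureTheory Set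

/-- The unit direction `e^{iπ/6}` of the ray `Y₁`. -/
noncomputable def e1 : ℂ := Complex.exp (Real.pi / 6 * Complex.I)

/-- The unit direction `e^{5iπ/6}` of the ray `Y₂`. -/
noncomputable def e5 : ℂ := Complex.exp (5 * Real.pi / 6 * Complex.I)

/-- The unit direction `e^{-iπ/6}` of the ray `Y₄`. -/
noncomputable def em1 : ℂ := Complex.exp (-(Real.pi / 6) * Complex.I)

/-- The unit direction `e^{-5iπ/6}` of the ray `Y₃`. -/
noncomputable def em5 : ℂ := Complex.exp (-(5 * Real.pi / 6) * Complex.I)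

/-- The contour integral over `Y₁ ∪ Y₂`. -/
noncomputable def CInt12 (h : ℂ → ℂ) : ℂ :=
  (∫ r in Ioi (0 : ℝ), h (r * e1)) * e1 - (∫ r in Ioi (0 : ℝ), h (r * e5)) * e5

/-- The contour integral over `Y₃ ∪ Y₄`. -/
noncomputable def CInt34 (h : ℂ → ℂ) : ℂ :=
  (∫ r in Ioi (0 : ℝ), h (r * em1)) * em1 - (∫ r in Ioi (0 : ℝ), h (r * em5)) * em5

/-- The integrand of `F₁`: `s` on `Y₃ ∪ Y₄`, `z` on `Y₁ ∪ Y₂`. -/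
noncomputable def K1 (y : ℝ) (s z : ℂ) : ℂ :=
  s * z / (s - z) * Complex.exp (-(2 * Complex.I) * (y * s + 4 * s ^ 3 / 3)) *
    Complex.exp (2 * Complex.I * (y * z + 4 * z ^ 3 / 3))

/-- The integrand of `F₂`: `s` on `Y₁ ∪ Y₂`, `z` on `Y₃ ∪ Y₄`. -/
noncomputable def K2 (y : ℝ) (s z : ℂ) : ℂ :=
  s * z / (s - z) * Complex.exp (2 * Complex.I * (y * s + 4 * s ^ 3 / 3)) *
    Complex.exp (-(2 * Complex.I) * (y * z + 4 * z ^ 3 / 3))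

/-- `F₁(y) = ∫_{Y₁∪Y₂} (∫_{Y₃∪Y₄} (sz/(s-z)) e^{-2i(ys+4s³/3)} ds) e^{2i(yz+4z³/3)} dz`. -/
noncomputable def F1 (y : ℝ) : ℂ :=
  CInt12 fun z => CInt34 fun s => K1 y s z

/-- `F₂(y) = ∫_{Y₃∪Y₄} (∫_{Y₁∪Y₂} (sz/(s-z)) e^{2i(ys+4s³/3)} ds) e^{-2i(yz+4z³/3)} dz`. -/
noncomputable def F2 (y : ℝ) : ℂ :=
  CInt34 fun z => CInt12 fun s => K2 y s z

/-!
On each of the rays `ℝ₊α` with `α³ = i` (the rays `Y₁`, `Y₂` and the reflected rays `-Y₃`, `-Y₄`)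
the factor `exp (2i(yz + 4z³/3))` has modulus `exp (-(yr + 8r³/3))`, and a point of `Y₃ ∪ Y₄` at
distance `r` from the origin and one of `Y₁ ∪ Y₂` at distance `t` are at least `(r + t)/2` apart, so
`|sz/(s - z)| ≤ 2r`. The integrands are therefore dominated by products of integrable functions of
`r` and `t`, Fubini writes both `F₁` and `F₂` through the same four double integrals over the
quarter plane, and since `K₂(s, z) = -K₁(z, s)`, exchanging the two variables gives `F₂ = -F₁`.
-/

section Fubini

variable {α β E : Type*} [MeasurableSpace α] [MeasurableSpace β] {μ : Measure α} {ν : Measure β}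
  [SFinite μ] [SFinite ν] [NormedAddCommGroup E] [NormedSpace ℝ E]

theorem setIntegral_prod_symm (f : α × β → E) {s : Set α} {t : Set β}
    (hf : IntegrableOn f (s ×ˢ t) (μ.prod ν)) :
    ∫ z in s ×ˢ t, f z ∂μ.prod ν = ∫ y in t, ∫ x in s, f (x, y) ∂μ ∂ν := by
  rw [IntegrableOn, ← Measure.prod_restrict] at hf
  rw [← Measure.prod_restrict]
  exact integral_prod_symm f hf

theorem IntegrableOn.integral_prod_right {f : α × β → E} {s : Set α} {t : Set β}
    (hf : IntegrableOn f (s ×ˢ t) (μ.prod ν)) :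
    IntegrableOn (fun y => ∫ x in s, f (x, y) ∂μ) t ν := by
  rw [IntegrableOn, ← Measure.prod_restrict] at hf
  exact hf.integral_prod_right

end Fubini

noncomputable def twoRayIntegral (a₁ a₂ : ℂ) (h : ℂ → ℂ) : ℂ :=
  (∫ r in Ioi (0 : ℝ), h (r * a₁)) * a₁ - (∫ r in Ioi (0 : ℝ), h (r * a₂)) * a₂

theorem CInt12_eq_twoRayIntegral : CInt12 = twoRayIntegral e1 e5 := rfl

theorem CInt34_eq_twoRayIntegral : CInt34 = twoRayIntegral em1 em5 := rfl

noncomputable def rayProdIntegral (f : ℂ → ℂ → ℂ) (b a : ℂ) : ℂ :=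
  ∫ p in Ioi (0 : ℝ) ×ˢ Ioi (0 : ℝ), f (p.1 * b) (p.2 * a)

theorem integral_twoRayIntegral {f : ℂ → ℂ → ℂ} {b₁ b₂ a : ℂ}
    (h₁ : IntegrableOn (fun p : ℝ × ℝ => f (p.1 * b₁) (p.2 * a)) (Ioi 0 ×ˢ Ioi 0))
    (h₂ : IntegrableOn (fun p : ℝ × ℝ => f (p.1 * b₂) (p.2 * a)) (Ioi 0 ×ˢ Ioi 0)) :
    ∫ t in Ioi (0 : ℝ), twoRayIntegral b₁ b₂ (fun s => f s (t * a)) =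
      rayProdIntegral f b₁ a * b₁ - rayProdIntegral f b₂ a * b₂ := by
  rw [Measure.volume_eq_prod] at h₁ h₂
  rw [rayProdIntegral, rayProdIntegral, Measure.volume_eq_prod, setIntegral_prod_symm _ h₁,
    setIntegral_prod_symm _ h₂, ← integral_mul_const, ← integral_mul_const, ← integral_sub]
  · rfl
  · exact (IntegrableOn.integral_prod_right h₁).mul_const b₁
  · exact (IntegrableOn.integral_prod_right h₂).mul_const b₂

theorem twoRayIntegral_twoRayIntegral {f : ℂ → ℂ → ℂ} {a₁ a₂ b₁ b₂ : ℂ}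
    (hf : ∀ a ∈ ({a₁, a₂} : Set ℂ), ∀ b ∈ ({b₁, b₂} : Set ℂ),
      IntegrableOn (fun p : ℝ × ℝ => f (p.1 * b) (p.2 * a)) (Ioi 0 ×ˢ Ioi 0)) :
    twoRayIntegral a₁ a₂ (fun z => twoRayIntegral b₁ b₂ fun s => f s z) =
      (rayProdIntegral f b₁ a₁ * b₁ - rayProdIntegral f b₂ a₁ * b₂) * a₁ -
        (rayProdIntegral f b₁ a₂ * b₁ - rayProdIntegral f b₂ a₂ * b₂) * a₂ := by
  simp only [Set.mem_insert_iff, Set.mem_singleton_iff, forall_eq_or_imp, forall_eq] at hf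
  rw [twoRayIntegral, integral_twoRayIntegral hf.1.1 hf.1.2, integral_twoRayIntegral hf.2.1 hf.2.2]

theorem K2_eq_neg_K1 (y : ℝ) : K2 y = fun s z => -K1 y z s := by
  ext s z
  rw [K1, K2, ← neg_sub, div_neg]
  ring

theorem rayProdIntegral_K2 (y : ℝ) (a b : ℂ) :
    rayProdIntegral (K2 y) a b = -rayProdIntegral (K1 y) b a := by
  rw [K2_eq_neg_K1, rayProdIntegral, rayProdIntegral, integral_neg]
  exact congrArg Neg.neg (setIntegral_prod_swap (μ := volume) (ν := volume) (Ioi 0) (Ioi 0)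
    fun p : ℝ × ℝ => K1 y (p.1 * b) (p.2 * a))

/-- Satisfied by the directions of `Y₁`, `Y₂`, `-Y₃`, `-Y₄`. The cube `i` makes `exp (8iz³/3)` decay
along `ℝ₊α`; `Im α = 1/2` keeps `ℝ₊α` and `-ℝ₊α'` at distance at least `(r + t)/2`. -/
def IsUpperRayDir (α : ℂ) : Prop := α ^ 3 = Complex.I ∧ α.im = 1 / 2

theorem isUpperRayDir_e1 : IsUpperRayDir e1 := by
  constructor
  · rw [e1, ← Complex.exp_nat_mul]
    convert Complex.exp_pi_div_two_mul_I using 2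
    push_cast
    ring
  · rw [e1, ← Complex.ofReal_ofNat, ← Complex.ofReal_div, Complex.exp_ofReal_mul_I_im,
      Real.sin_pi_div_six]

theorem isUpperRayDir_e5 : IsUpperRayDir e5 := by
  constructor
  · rw [e5, ← Complex.exp_nat_mul, show ((3 : ℕ) : ℂ) * (5 * Real.pi / 6 * Complex.I) =
      Real.pi / 2 * Complex.I + 2 * Real.pi * Complex.I by push_cast; ring,
      Complex.exp_add, Complex.exp_two_pi_mul_I, mul_one, Complex.exp_pi_div_two_mul_I]
  · rw [e5, show (5 * Real.pi / 6 : ℂ) = ((Real.pi - Real.pi / 6 : ℝ) : ℂ) by push_cast; ring,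
      Complex.exp_ofReal_mul_I_im, Real.sin_pi_sub, Real.sin_pi_div_six]

theorem neg_em1 : -em1 = e5 := by
  rw [em1, e5, ← Complex.exp_add_pi_mul_I]
  ring_nf

theorem neg_em5 : -em5 = e1 := by
  rw [em5, e1, ← Complex.exp_add_pi_mul_I]
  ring_nf

noncomputable def cubicDecay (y r : ℝ) : ℝ := Real.exp (-(y * r + 8 * r ^ 3 / 3))

theorem half_add_le_norm_sub {α β : ℂ} (hα : α.im = 1 / 2) (hβ : β.im = -(1 / 2)) (r t : ℝ) :
    (r + t) / 2 ≤ ‖r * β - t * α‖ :=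
  calc (r + t) / 2 ≤ |(r * β - t * α).im| := by
        rw [Complex.sub_im, Complex.im_ofReal_mul, Complex.im_ofReal_mul, hα, hβ]
        exact (le_of_eq (by ring)).trans (neg_le_abs _)
    _ ≤ ‖r * β - t * α‖ := Complex.abs_im_le_norm _

namespace IsUpperRayDir

variable {α β : ℂ}

theorem norm_eq_one (h : IsUpperRayDir α) : ‖α‖ = 1 := by
  have : ‖α‖ ^ 3 = 1 := by rw [← norm_pow, h.1, Complex.norm_I]
  exact (pow_eq_one_iff_of_nonneg (norm_nonneg _) (by norm_num)).1 this

theorem norm_exp_phase (h : IsUpperRayDir α) (y t : ℝ) :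
    ‖Complex.exp (2 * Complex.I * (y * (t * α) + 4 * (t * α) ^ 3 / 3))‖ = cubicDecay y t := by
  have hphase : 2 * Complex.I * (y * (t * α) + 4 * (t * α) ^ 3 / 3) =
      ((2 * y * t : ℝ) : ℂ) * (α * Complex.I) - ((8 * t ^ 3 / 3 : ℝ) : ℂ) := by
    push_cast
    linear_combination
      (8 / 3 * (t : ℂ) ^ 3 * Complex.I) * h.1 + 8 / 3 * (t : ℂ) ^ 3 * Complex.I_sq
  rw [Complex.norm_exp, hphase, Complex.sub_re, Complex.re_ofReal_mul, Complex.mul_I_re, h.2,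
    Complex.ofReal_re, cubicDecay]
  ring_nf

theorem norm_mul_div_sub_le (hα : IsUpperRayDir α) (hβ : IsUpperRayDir (-β)) {r t : ℝ}
    (hr : 0 ≤ r) (ht : 0 < t) : ‖r * β * (t * α) / (r * β - t * α)‖ ≤ 2 * r := by
  have hβim : β.im = -(1 / 2) := by linarith [Complex.neg_im β ▸ hβ.2]
  have hsep := half_add_le_norm_sub hα.2 hβim r t
  have hβ1 : ‖β‖ = 1 := by rw [← norm_neg, hβ.norm_eq_one]
  rw [norm_div, div_le_iff₀ (by linarith), norm_mul, norm_mul, norm_mul, hα.norm_eq_one, hβ1,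
    Complex.norm_real, Complex.norm_real, Real.norm_of_nonneg hr, Real.norm_of_nonneg ht.le]
  nlinarith

end IsUpperRayDir

theorem norm_K1_le (y : ℝ) {α β : ℂ} (hα : IsUpperRayDir α) (hβ : IsUpperRayDir (-β)) {r t : ℝ}
    (hr : 0 ≤ r) (ht : 0 < t) :
    ‖K1 y (r * β) (t * α)‖ ≤ 2 * r * cubicDecay y r * cubicDecay y t := by
  have hphase : -(2 * Complex.I) * (y * (r * β) + 4 * (r * β) ^ 3 / 3) =
      2 * Complex.I * (y * (r * -β) + 4 * (r * -β) ^ 3 / 3) := by ring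
  rw [K1, norm_mul, norm_mul, hphase, hβ.norm_exp_phase, hα.norm_exp_phase]
  gcongr
  · exact (Real.exp_pos _).le
  · exact (Real.exp_pos _).le
  · exact hα.norm_mul_div_sub_le hβ hr ht

theorem cubicDecay_le (y : ℝ) {r : ℝ} (hr : 0 ≤ r) :
    cubicDecay y r ≤ Real.exp ((|y| + 1) ^ 2) * Real.exp (-r) := by
  rw [cubicDecay, ← Real.exp_add, Real.exp_le_exp]
  have hy : -y * r ≤ |y| * r := mul_le_mul_of_nonneg_right (neg_le_abs y) hr
  rcases le_or_gt r (|y| + 1) with h | h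
  · nlinarith [mul_le_mul_of_nonneg_left h (by positivity : 0 ≤ |y| + 1), pow_nonneg hr 3]
  · have hr1 : 0 ≤ r - 1 := by linarith [abs_nonneg y]
    nlinarith [mul_le_mul_of_nonneg_right h.le hr, mul_nonneg (mul_nonneg hr hr) hr1]

theorem integrableOn_pow_mul_cubicDecay (y : ℝ) (n : ℕ) :
    IntegrableOn (fun r => r ^ n * cubicDecay y r) (Ioi 0) := by
  have hdom : IntegrableOn (fun r : ℝ => Real.exp ((|y| + 1) ^ 2) * (r ^ n * Real.exp (-r)))
      (Ioi 0) := by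
    have h := integrableOn_rpow_mul_exp_neg_rpow (s := n)
      (neg_one_lt_zero.trans_le n.cast_nonneg) one_pos
    simp only [Real.rpow_natCast, Real.rpow_one] at h
    exact h.const_mul _
  refine hdom.mono' (by unfold cubicDecay; fun_prop) ((ae_restrict_iff' measurableSet_Ioi).2 ?_)
  filter_upwards with r (hr : 0 < r)
  have hpos : 0 ≤ r ^ n * cubicDecay y r := mul_nonneg (pow_nonneg hr.le n) (Real.exp_pos _).le
  rw [Real.norm_of_nonneg hpos, mul_left_comm]
  gcongr
  exact cubicDecay_le y hr.le

theorem integrableOn_K1 (y : ℝ) {α β : ℂ} (hα : IsUpperRayDir α) (hβ : IsUpperRayDir (-β)) :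
    IntegrableOn (fun p : ℝ × ℝ => K1 y (p.1 * β) (p.2 * α)) (Ioi 0 ×ˢ Ioi 0) := by
  have hdom : IntegrableOn (fun p : ℝ × ℝ => 2 * p.1 * cubicDecay y p.1 * cubicDecay y p.2)
      (Ioi 0 ×ˢ Ioi 0) := by
    have := ((integrableOn_pow_mul_cubicDecay y 1).mul_prod
      (integrableOn_pow_mul_cubicDecay y 0)).const_mul 2
    simp only [pow_one, pow_zero, one_mul, ← mul_assoc] at this
    rwa [Measure.prod_restrict, ← Measure.volume_eq_prod] at this
  refine hdom.mono' (by unfold K1; fun_prop)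
    ((ae_restrict_iff' (measurableSet_Ioi.prod measurableSet_Ioi)).2 ?_)
  filter_upwards with p hp
  exact norm_K1_le y hα hβ hp.1.le hp.2

theorem integrableOn_K2 (y : ℝ) {α β : ℂ} (hα : IsUpperRayDir α) (hβ : IsUpperRayDir (-β)) :
    IntegrableOn (fun p : ℝ × ℝ => K2 y (p.1 * α) (p.2 * β)) (Ioi 0 ×ˢ Ioi 0) := by
  rw [K2_eq_neg_K1]
  exact (IntegrableOn.swap (μ := volume) (ν := volume) (integrableOn_K1 y hα hβ)).neg

/-- Antisymmetry of the iterated double contour integral (from the proof of Lemma A.2):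
the double integrals converge absolutely and `F₂(y) = -F₁(y)`. -/
theorem double_contour_antisymmetry (y : ℝ) :
    (∀ α ∈ ({e1, e5} : Set ℂ), ∀ β ∈ ({em1, em5} : Set ℂ),
      IntegrableOn (fun p : ℝ × ℝ => K1 y (p.1 * β) (p.2 * α))
        ((Ioi (0 : ℝ)) ×ˢ (Ioi (0 : ℝ)))) ∧
    (∀ α ∈ ({e1, e5} : Set ℂ), ∀ β ∈ ({em1, em5} : Set ℂ),
      IntegrableOn (fun p : ℝ × ℝ => K2 y (p.1 * α) (p.2 * β))
        ((Ioi (0 : ℝ)) ×ˢ (Ioi (0 : ℝ)))) ∧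
    F2 y = -F1 y := by
  have hdir₁₂ : ∀ α ∈ ({e1, e5} : Set ℂ), IsUpperRayDir α := by
    rintro α (rfl | rfl)
    exacts [isUpperRayDir_e1, isUpperRayDir_e5]
  have hdir₃₄ : ∀ β ∈ ({em1, em5} : Set ℂ), IsUpperRayDir (-β) := by
    rintro β (rfl | rfl)
    exacts [neg_em1 ▸ isUpperRayDir_e5, neg_em5 ▸ isUpperRayDir_e1]
  have hK1 : ∀ α ∈ ({e1, e5} : Set ℂ), ∀ β ∈ ({em1, em5} : Set ℂ),
      IntegrableOn (fun p : ℝ × ℝ => K1 y (p.1 * β) (p.2 * α)) (Ioi 0 ×ˢ Ioi 0) :=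
    fun α hα β hβ => integrableOn_K1 y (hdir₁₂ α hα) (hdir₃₄ β hβ)
  have hK2 : ∀ α ∈ ({e1, e5} : Set ℂ), ∀ β ∈ ({em1, em5} : Set ℂ),
      IntegrableOn (fun p : ℝ × ℝ => K2 y (p.1 * α) (p.2 * β)) (Ioi 0 ×ˢ Ioi 0) :=
    fun α hα β hβ => integrableOn_K2 y (hdir₁₂ α hα) (hdir₃₄ β hβ)
  refine ⟨hK1, hK2, ?_⟩
  rw [F1, F2, CInt12_eq_twoRayIntegral, CInt34_eq_twoRayIntegral,
    twoRayIntegral_twoRayIntegral hK1,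
    twoRayIntegral_twoRayIntegral fun β hβ α hα => hK2 α hα β hβ]
  simp only [rayProdIntegral_K2]
  ring
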